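/- Let n ∈ S² with n₃ ≠ ±1, let ζ₊ = −(n₁ + i n₂)/(n₃ + 1), ζ₋ = −(n₁ + i n₂)/(n₃ − 1), and let ℓ ∈ ℕ. Then for every radius ε with 0 < ε < |ζ₊ − ζ₋|, (1/(2πi)) ∮_{|ζ−ζ₊|=ε} n(ζ)^{−ℓ−1} dζ = binom(2ℓ, ℓ) · (ζ₋ − ζ₊)^{−ℓ} = binom(2ℓ, ℓ) · ((n₁ − i n₂)/2)^ℓ. -/

import Mathlib

/-!
On the unit sphere `n(ζ) = -w (ζ - ζ₊) (ζ - ζ₋)` with `w = (n₁ - i n₂)/2` and `w (ζ₋ - ζ₊) = 1`.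
By Cauchy's formula `(2πi)⁻¹ ∮ n(ζ)^{-ℓ-1} dζ` is `(-w)^{-ℓ-1}` times the `ℓ`-th Taylor
coefficient of `(ζ - ζ₋)^{-ℓ-1}` at `ζ₊`, namely `binom(-ℓ-1, ℓ) (ζ₊ - ζ₋)^{-2ℓ-1}
= (-1)^ℓ binom(2ℓ, ℓ) (-w)^{2ℓ+1}`, and the powers of `-w` collapse to `w^ℓ`.
-/

/-- `n(ζ) = (1/2)(n₁ + i n₂) + ζ n₃ − (1/2)(n₁ − i n₂) ζ²` as a function of `n ∈ ℝ³`. -/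
noncomputable def xz (ζ : ℂ) (n : Fin 3 → ℝ) : ℂ :=
  (1 / 2 : ℂ) * ((n 0 : ℂ) + Complex.I * (n 1 : ℂ)) + ζ * (n 2 : ℂ)
    - (1 / 2 : ℂ) * ((n 0 : ℂ) - Complex.I * (n 1 : ℂ)) * ζ ^ 2

open Finset Metric Complex Real

theorem iteratedDeriv_sub_const_zpow {𝕜 : Type*} [NontriviallyNormedField 𝕜]
    (c : 𝕜) (m : ℤ) (k : ℕ) (z : 𝕜) :
    iteratedDeriv k (fun z => (z - c) ^ m) z =
      (∏ i ∈ range k, ((m : 𝕜) - i)) * (z - c) ^ (m - k) := by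
  rw [iteratedDeriv_comp_sub_const (f := fun z => z ^ m), iteratedDeriv_eq_iterate]
  exact iter_deriv_zpow m (z - c) k

theorem prod_range_neg_sub_one_sub {R : Type*} [CommRing R] (ℓ : ℕ) :
    ∏ i ∈ range ℓ, ((-(ℓ : ℤ) - 1 : ℤ) - (i : R)) = (-1) ^ ℓ * ℓ.factorial * (2 * ℓ).choose ℓ := by
  have h := congrArg (Nat.cast (R := R)) (Nat.ascFactorial_eq_factorial_mul_choose ℓ ℓ)
  rw [Nat.ascFactorial_eq_prod_range, ← two_mul] at h
  push_cast at h
  have hsign : (-1 : R) ^ ℓ = ∏ _i ∈ range ℓ, (-1 : R) := by simp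
  rw [mul_assoc, ← h, hsign, ← prod_mul_distrib]
  refine prod_congr rfl fun i _ => ?_
  push_cast
  ring

theorem circleIntegral_sub_zpow_mul_sub_zpow {b c : ℂ} {R : ℝ} (hR : 0 < R)
    (hRc : R < ‖b - c‖) (k : ℕ) (m : ℤ) :
    (2 * π * I)⁻¹ * ∮ z in C(b, R), (z - b) ^ (-(k : ℤ) - 1) * (z - c) ^ m =
      (∏ i ∈ range k, ((m : ℂ) - i)) / k.factorial * (b - c) ^ (m - k) := by
  have hdiff : DifferentiableOn ℂ (fun z => (z - c) ^ m) (closedBall b R) := by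
    intro z hz
    have hzc : z - c ≠ 0 := by
      rintro hzc
      rw [mem_closedBall, sub_eq_zero.mp hzc, dist_comm, dist_eq_norm] at hz
      exact hz.not_gt hRc
    exact ((differentiableAt_id.sub_const c).zpow (Or.inl hzc)).differentiableWithinAt
  have hinteg : ∀ z : ℂ, (z - b) ^ (-(k : ℤ) - 1) * (z - c) ^ m =
      (1 / (z - b) ^ (k + 1)) • (z - c) ^ m := by
    intro z
    rw [smul_eq_mul, one_div, show -(k : ℤ) - 1 = -((k + 1 : ℕ) : ℤ) by push_cast; ring,
      zpow_neg, zpow_natCast]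
  simp_rw [hinteg, hdiff.circleIntegral_one_div_sub_center_pow_smul hR k, smul_eq_mul,
    iteratedDeriv_sub_const_zpow, ← mul_assoc]
  field_simp [two_pi_I_ne_zero]

theorem circleIntegral_sub_zpow_neg_succ_mul_sub_zpow_neg_succ {b c : ℂ} {R : ℝ} (hR : 0 < R)
    (hRc : R < ‖b - c‖) (ℓ : ℕ) :
    (2 * π * I)⁻¹ * ∮ z in C(b, R), (z - b) ^ (-(ℓ : ℤ) - 1) * (z - c) ^ (-(ℓ : ℤ) - 1) =
      (-1) ^ ℓ * (2 * ℓ).choose ℓ * (b - c) ^ (-(ℓ : ℤ) - 1 - ℓ) := by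
  have hfac : (ℓ.factorial : ℂ) ≠ 0 := by exact_mod_cast ℓ.factorial_ne_zero
  rw [circleIntegral_sub_zpow_mul_sub_zpow hR hRc, prod_range_neg_sub_one_sub]
  field_simp

theorem xz_eq_mul_sub_mul_sub (n : Fin 3 → ℝ) (hn : n 0 ^ 2 + n 1 ^ 2 + n 2 ^ 2 = 1)
    (h1 : n 2 ≠ 1) (h2 : n 2 ≠ -1) (ζ : ℂ) :
    xz ζ n = -(((n 0 : ℂ) - I * (n 1 : ℂ)) / 2) *
      (ζ - -((n 0 : ℂ) + I * (n 1 : ℂ)) / ((n 2 : ℂ) + 1)) *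
      (ζ - -((n 0 : ℂ) + I * (n 1 : ℂ)) / ((n 2 : ℂ) - 1)) := by
  have hp : (n 2 : ℂ) + 1 ≠ 0 := by exact_mod_cast fun h => h2 (eq_neg_of_add_eq_zero_left h)
  have hm : (n 2 : ℂ) - 1 ≠ 0 := by exact_mod_cast sub_ne_zero.mpr h1
  have hnC : (n 0 : ℂ) ^ 2 + (n 1 : ℂ) ^ 2 + (n 2 : ℂ) ^ 2 = 1 := by exact_mod_cast hn
  unfold xz
  field_simp
  linear_combination ((n 0 : ℂ) + I * n 1 + 2 * ζ * n 2) * (hnC - (n 1 : ℂ) ^ 2 * I_sq)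

theorem half_conj_mul_sub_roots_eq_one (n : Fin 3 → ℝ) (hn : n 0 ^ 2 + n 1 ^ 2 + n 2 ^ 2 = 1)
    (h1 : n 2 ≠ 1) (h2 : n 2 ≠ -1) :
    ((n 0 : ℂ) - I * (n 1 : ℂ)) / 2 *
      (-((n 0 : ℂ) + I * (n 1 : ℂ)) / ((n 2 : ℂ) - 1) -
        -((n 0 : ℂ) + I * (n 1 : ℂ)) / ((n 2 : ℂ) + 1)) = 1 := by
  have hp : (n 2 : ℂ) + 1 ≠ 0 := by exact_mod_cast fun h => h2 (eq_neg_of_add_eq_zero_left h)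
  have hm : (n 2 : ℂ) - 1 ≠ 0 := by exact_mod_cast sub_ne_zero.mpr h1
  have hnC : (n 0 : ℂ) ^ 2 + (n 1 : ℂ) ^ 2 + (n 2 : ℂ) ^ 2 = 1 := by exact_mod_cast hn
  field_simp
  linear_combination (-2 : ℂ) * (hnC - (n 1 : ℂ) ^ 2 * I_sq)

/-- For a unit vector `n ∈ S²` with `n₃ ≠ ±1`, roots `ζ₊, ζ₋` of `n(ζ)`, `ℓ ∈ ℕ` and
`0 < ε < |ζ₊ − ζ₋|`, the circle integral of `n(ζ)^{−ℓ−1}` around `ζ₊` satisfies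
`(1/(2πi)) ∮ n(ζ)^{−ℓ−1} dζ = C(2ℓ,ℓ) (ζ₋ − ζ₊)^{−ℓ} = C(2ℓ,ℓ) ((n₁ − i n₂)/2)^ℓ`. -/
theorem circle_integral_inv_pow_n_zeta (n : Fin 3 → ℝ)
    (hn : n 0 ^ 2 + n 1 ^ 2 + n 2 ^ 2 = 1)
    (h1 : n 2 ≠ 1) (h2 : n 2 ≠ -1)
    (ζp ζm : ℂ)
    (hζp : ζp = -(((n 0 : ℂ) + Complex.I * (n 1 : ℂ))) / ((n 2 : ℂ) + 1))
    (hζm : ζm = -(((n 0 : ℂ) + Complex.I * (n 1 : ℂ))) / ((n 2 : ℂ) - 1))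
    (ℓ : ℕ) (ε : ℝ) (hε : 0 < ε) (hε' : ε < ‖ζp - ζm‖) :
    (1 / (2 * (Real.pi : ℂ) * Complex.I)) *
        (∮ ζ in C(ζp, ε), xz ζ n ^ (-(ℓ : ℤ) - 1)) =
      ((2 * ℓ).choose ℓ : ℂ) * (ζm - ζp) ^ (-(ℓ : ℤ)) ∧
    (1 / (2 * (Real.pi : ℂ) * Complex.I)) *
        (∮ ζ in C(ζp, ε), xz ζ n ^ (-(ℓ : ℤ) - 1)) =
      ((2 * ℓ).choose ℓ : ℂ) * ((((n 0 : ℂ) - Complex.I * (n 1 : ℂ))) / 2) ^ ℓ := by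
  set w : ℂ := ((n 0 : ℂ) - I * (n 1 : ℂ)) / 2
  have hw : w * (ζm - ζp) = 1 := hζp ▸ hζm ▸ half_conj_mul_sub_roots_eq_one n hn h1 h2
  have hm_sub_p : ζm - ζp = w⁻¹ := eq_inv_of_mul_eq_one_right hw
  have hp_sub_m : ζp - ζm = (-w)⁻¹ := by rw [inv_neg, ← hm_sub_p, neg_sub]
  have hintegrand : ∀ ζ, xz ζ n ^ (-(ℓ : ℤ) - 1) =
      (-w) ^ (-(ℓ : ℤ) - 1) * ((ζ - ζp) ^ (-(ℓ : ℤ) - 1) * (ζ - ζm) ^ (-(ℓ : ℤ) - 1)) := by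
    intro ζ
    rw [xz_eq_mul_sub_mul_sub n hn h1 h2, ← hζp, ← hζm, mul_zpow, mul_zpow, mul_assoc]
  have hvalue : (1 / (2 * (π : ℂ) * I)) * (∮ ζ in C(ζp, ε), xz ζ n ^ (-(ℓ : ℤ) - 1)) =
      ((2 * ℓ).choose ℓ : ℂ) * w ^ ℓ := by
    simp_rw [hintegrand]
    have hw0 : -w ≠ 0 := neg_ne_zero.mpr (left_ne_zero_of_mul_eq_one hw)
    have hsign : ((-1 : ℂ) ^ ℓ) ^ 2 = 1 := by rw [← pow_mul, pow_mul', neg_one_sq, one_pow]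
    rw [circleIntegral.integral_const_mul, one_div, mul_left_comm,
      circleIntegral_sub_zpow_neg_succ_mul_sub_zpow_neg_succ hε hε', hp_sub_m, inv_zpow',
      mul_left_comm, ← zpow_add₀ hw0, show -(ℓ : ℤ) - 1 + -(-ℓ - 1 - ℓ) = ℓ by ring,
      zpow_natCast, neg_pow w]
    linear_combination ((2 * ℓ).choose ℓ * w ^ ℓ : ℂ) * hsign
  refine ⟨hvalue.trans ?_, hvalue⟩
  rw [hm_sub_p, inv_zpow', neg_neg, zpow_natCast]
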